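/- (Key descent inequality with bounded noise.) Under the hypotheses: f C² with ∇²f ⪯ λₙ I, |f − f̃| ≤ ε_f pointwise, ‖∇f(x) − g‖ ≤ t η ‖g‖ with η ∈ (0,1), and ‖s‖ ≥ κ₁‖g‖ with κ₁ > 0, one has f̃(x + ts) ≤ f̃(x) + 2ε_f + (λₙ/2) t² ‖s‖² + (t²η/κ₁)‖s‖² + t gᵀs. -/

import Mathlib

open scoped RealInnerProductSpace

theorem grad_diff {n : ℕ} (f : EuclideanSpace ℝ (Fin n) → ℝ) (hf : ContDiff ℝ 2 f) :
    Differentiable ℝ (gradient f) := by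
  have h1 : ContDiff ℝ 1 (fderiv ℝ f) :=
    (contDiff_succ_iff_fderiv.mp (show ContDiff ℝ (1+1) f by norm_num; exact hf)).2.2
  have : gradient f = fun x => (InnerProductSpace.toDual ℝ _).symm (fderiv ℝ f x) := rfl
  rw [this]
  exact fun x => ((InnerProductSpace.toDual ℝ _).symm.differentiable.differentiableAt).comp x
    (h1.differentiable one_ne_zero x)

theorem taylor_ub {n : ℕ} (f : EuclideanSpace ℝ (Fin n) → ℝ) (lamn : ℝ)
    (hf : ContDiff ℝ 2 f)
    (hHess : ∀ y v, ⟪v, fderiv ℝ (gradient f) y v⟫ ≤ lamn * ‖v‖ ^ 2)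
    (x u : EuclideanSpace ℝ (Fin n)) :
    f (x + u) ≤ f x + ⟪gradient f x, u⟫ + lamn / 2 * ‖u‖ ^ 2 := by
  have hdf : Differentiable ℝ f := hf.differentiable (by norm_num)
  have hdg : Differentiable ℝ (gradient f) := grad_diff f hf
  set L : ℝ → EuclideanSpace ℝ (Fin n) := fun τ => x + τ • u with hL
  have hLd : ∀ τ : ℝ, HasDerivAt L u τ := by
    intro τ
    rw [hL]
    simpa using ((hasDerivAt_id τ).smul_const u).const_add x
  -- ψ τ = ⟪gradient f (L τ), u⟫
  set ψ : ℝ → ℝ := fun τ => ⟪gradient f (L τ), u⟫ with hψ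
  have hψd : ∀ τ : ℝ, HasDerivAt ψ ⟪fderiv ℝ (gradient f) (L τ) u, u⟫ τ := by
    intro τ
    have h1 : HasDerivAt (fun τ => gradient f (L τ)) (fderiv ℝ (gradient f) (L τ) u) τ :=
      ((hdg (L τ)).hasFDerivAt).comp_hasDerivAt τ (hLd τ)
    have := h1.inner ℝ (hasDerivAt_const τ u)
    simpa [hψ] using this
  -- step 1: ψ τ ≤ ψ 0 + τ * lamn * ‖u‖² for τ ≥ 0
  have step1 : ∀ τ : ℝ, 0 ≤ τ → ψ τ ≤ ψ 0 + τ * (lamn * ‖u‖ ^ 2) := by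
    intro τ hτ
    set G : ℝ → ℝ := fun τ => ψ τ - τ * (lamn * ‖u‖ ^ 2) with hG
    have hGd : ∀ σ : ℝ, HasDerivAt G (⟪fderiv ℝ (gradient f) (L σ) u, u⟫ - lamn * ‖u‖ ^ 2) σ := by
      intro σ
      exact ((hψd σ).sub ((hasDerivAt_id σ).mul_const (lamn * ‖u‖ ^ 2))).congr_deriv (by ring)
    have hanti : Antitone G := by
      apply antitone_of_deriv_nonpos (fun σ => (hGd σ).differentiableAt)
      intro σ
      rw [(hGd σ).deriv]
      have := hHess (L σ) u
      rw [real_inner_comm] at this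
      linarith
    have := hanti hτ
    simp only [hG, zero_mul, sub_zero] at this
    linarith
  -- step 2
  set χ : ℝ → ℝ := fun τ => f (L τ) - τ * ψ 0 - lamn / 2 * τ ^ 2 * ‖u‖ ^ 2 with hχ
  have hφd : ∀ τ : ℝ, HasDerivAt (fun τ => f (L τ)) (ψ τ) τ := by
    intro τ
    have h1 : HasDerivAt (fun τ => f (L τ)) ((InnerProductSpace.toDual ℝ _) (gradient f (L τ)) u) τ :=
      ((hdf (L τ)).hasGradientAt.hasFDerivAt).comp_hasDerivAt τ (hLd τ)
    simpa [hψ, InnerProductSpace.toDual_apply_apply] using h1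
  have hχd : ∀ τ : ℝ, HasDerivAt χ (ψ τ - ψ 0 - lamn * τ * ‖u‖ ^ 2) τ := by
    intro τ
    have h2 : HasDerivAt (fun τ : ℝ => lamn / 2 * τ ^ 2 * ‖u‖ ^ 2)
        (lamn * τ * ‖u‖ ^ 2) τ := by
      have : HasDerivAt (fun τ : ℝ => τ ^ 2) (2 * τ) τ := by
        simpa using (hasDerivAt_pow 2 τ)
      have := (this.const_mul (lamn / 2)).mul_const (‖u‖ ^ 2)
      exact this.congr_deriv (by ring)
    exact (((hφd τ).sub ((hasDerivAt_id τ).mul_const (ψ 0))).sub h2).congr_deriv (by ring)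
  have hanti : AntitoneOn χ (Set.Ici (0:ℝ)) := by
    apply antitoneOn_of_deriv_nonpos (convex_Ici 0)
      (fun σ _ => ((hχd σ).differentiableAt.continuousAt).continuousWithinAt)
      (fun σ hσ => (hχd σ).differentiableAt.differentiableWithinAt)
    intro σ hσ
    rw [interior_Ici] at hσ
    rw [(hχd σ).deriv]
    have := step1 σ (le_of_lt hσ)
    nlinarith
  have h01 := hanti (Set.self_mem_Ici) (Set.mem_Ici.mpr zero_le_one) zero_le_one
  simp only [hχ, hψ, hL] at h01
  simp only [zero_smul, add_zero, one_smul, one_mul, one_pow] at h01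
  linarith

/-- Key descent inequality with bounded noise. -/
theorem stmt_7 {n : ℕ} (f ftil : EuclideanSpace ℝ (Fin n) → ℝ)
    (lamn epsf kappa1 eta t : ℝ)
    (x s g : EuclideanSpace ℝ (Fin n))
    (hf : ContDiff ℝ 2 f)
    (hHess : ∀ y v, ⟪v, fderiv ℝ (gradient f) y v⟫ ≤ lamn * ‖v‖ ^ 2)
    (hnoise : ∀ y, |f y - ftil y| ≤ epsf)
    (heta : 0 < eta) (heta1 : eta < 1)
    (hacc : ‖gradient f x - g‖ ≤ t * eta * ‖g‖)
    (hkappa1 : 0 < kappa1)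
    (hs1 : kappa1 * ‖g‖ ≤ ‖s‖)
    (ht : 0 < t) :
    ftil (x + t • s) ≤ ftil x + 2 * epsf + lamn / 2 * t ^ 2 * ‖s‖ ^ 2 +
      t ^ 2 * eta / kappa1 * ‖s‖ ^ 2 + t * ⟪g, s⟫ := by
  have htayl := taylor_ub f lamn hf hHess x (t • s)
  have hn1 := abs_le.mp (hnoise (x + t • s))
  have hn2 := abs_le.mp (hnoise x)
  have hus : ‖t • s‖ ^ 2 = t ^ 2 * ‖s‖ ^ 2 := by
    rw [norm_smul]; simp [mul_pow, abs_of_pos ht]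
  have hinner : ⟪gradient f x, t • s⟫ = t * ⟪gradient f x - g, s⟫ + t * ⟪g, s⟫ := by
    rw [real_inner_smul_right, inner_sub_left]
    ring
  have hcs : ⟪gradient f x - g, s⟫ ≤ t * eta * ‖g‖ * ‖s‖ := by
    calc ⟪gradient f x - g, s⟫ ≤ ‖gradient f x - g‖ * ‖s‖ := real_inner_le_norm _ _
    _ ≤ t * eta * ‖g‖ * ‖s‖ := by
        apply mul_le_mul_of_nonneg_right hacc (norm_nonneg s)
  have hg : ‖g‖ ≤ ‖s‖ / kappa1 := by
    rw [le_div_iff₀ hkappa1]; linarith [hs1]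
  have hbound : t * eta * ‖g‖ * ‖s‖ ≤ t * eta * ‖s‖ ^ 2 / kappa1 := by
    have h1 : t * eta * ‖g‖ * ‖s‖ ≤ t * eta * (‖s‖ / kappa1) * ‖s‖ := by
      apply mul_le_mul_of_nonneg_right _ (norm_nonneg s)
      exact mul_le_mul_of_nonneg_left hg (by positivity)
    calc t * eta * ‖g‖ * ‖s‖ ≤ t * eta * (‖s‖ / kappa1) * ‖s‖ := h1
    _ = t * eta * ‖s‖ ^ 2 / kappa1 := by ring
  rw [hus, hinner] at htayl
  have : t * ⟪gradient f x - g, s⟫ ≤ t ^ 2 * eta / kappa1 * ‖s‖ ^ 2 := by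
    have := mul_le_mul_of_nonneg_left (hcs.trans hbound) (le_of_lt ht)
    calc t * ⟪gradient f x - g, s⟫ ≤ t * (t * eta * ‖s‖ ^ 2 / kappa1) := this
    _ = t ^ 2 * eta / kappa1 * ‖s‖ ^ 2 := by ring
  linarith
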